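/- Let A be a non-semisimple finite-dimensional k-algebra and M = A ⊕ D(A). If every indecomposable A-module is projective or injective, then gldim End_A(M) ≤ 3 and hence rep.dim A ≤ 3. -/

import Mathlib

open CategoryTheory

universe u

section Defs
variable (A : Type u) [Ring A]

/-- `N` lies in `add M`: it is a direct summand of a finite direct sum of copies of `M`. -/
def MemAdd (M N : ModuleCat.{u} A) : Prop :=
  ∃ (n : ℕ) (i : N ⟶ ModuleCat.of A (Fin n → M)) (p : ModuleCat.of A (Fin n → M) ⟶ N),
    i ≫ p = 𝟙 N

/-- `0 → M₁ →f M₀ →g X → 0` is a short exact sequence of `A`-modules. -/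
def IsSES {M₁ M₀ X : ModuleCat.{u} A} (f : M₁ ⟶ M₀) (g : M₀ ⟶ X) : Prop :=
  Function.Injective f ∧ Function.Surjective g ∧ LinearMap.range f.hom = LinearMap.ker g.hom

/-- `g : M₀ → X` is a right `add M`-approximation of `X`. -/
def IsRightApprox (M : ModuleCat.{u} A) {M₀ X : ModuleCat.{u} A} (g : M₀ ⟶ X) : Prop :=
  MemAdd A M M₀ ∧ ∀ (N : ModuleCat.{u} A) (f : N ⟶ X), MemAdd A M N → ∃ q : N ⟶ M₀, q ≫ g = f

/-- `g` is right minimal. -/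
def IsRightMinimal {M₀ X : ModuleCat.{u} A} (g : M₀ ⟶ X) : Prop :=
  ∀ h : M₀ ⟶ M₀, h ≫ g = g → IsIso h

/-- `0 → M₁ → M₀ → X → 0` is an `add M`-approximating sequence for `X`. -/
def IsApproxSeq (M : ModuleCat.{u} A) {M₁ M₀ X : ModuleCat.{u} A}
    (f : M₁ ⟶ M₀) (g : M₀ ⟶ X) : Prop :=
  MemAdd A M M₁ ∧ IsSES A f g ∧ IsRightApprox A M g

/-- minimal `add M`-approximating sequence. -/
def IsMinApproxSeq (M : ModuleCat.{u} A) {M₁ M₀ X : ModuleCat.{u} A}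
    (f : M₁ ⟶ M₀) (g : M₀ ⟶ X) : Prop :=
  IsApproxSeq A M f g ∧ IsRightMinimal A g

def HasApproxSeq (M X : ModuleCat.{u} A) : Prop :=
  ∃ (M₁ M₀ : ModuleCat.{u} A) (f : M₁ ⟶ M₀) (g : M₀ ⟶ X), IsApproxSeq A M f g

/-- projective dimension at most `n`. -/
def PdLE : ℕ → ModuleCat.{u} A → Prop
  | 0, X => Projective X
  | n+1, X => Projective X ∨ ∃ (K P : ModuleCat.{u} A) (f : K ⟶ P) (g : P ⟶ X),
      Projective P ∧ IsSES A f g ∧ PdLE n K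

/-- global dimension at most `n` (on finitely generated modules). -/
def GlobalDimLE (n : ℕ) : Prop := ∀ X : ModuleCat.{u} A, Module.Finite A X → PdLE A n X

/-- `M` is a generator-cogenerator of `mod A`. -/
def IsGenCogen (M : ModuleCat.{u} A) : Prop :=
  MemAdd A M (ModuleCat.of A A) ∧
    ∀ N : ModuleCat.{u} A, Module.Finite A N → Injective N → MemAdd A M N

/-- representation dimension at most `n`. -/
def RepDimLE (n : ℕ) : Prop :=
  ∃ M : ModuleCat.{u} A, Module.Finite A M ∧ IsGenCogen A M ∧
    GlobalDimLE (Module.End A M) n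

/-- representation dimension equal to `n`. -/
def RepDimEq (n : ℕ) : Prop := RepDimLE A n ∧ ∀ m : ℕ, m < n → ¬ RepDimLE A m

/-- indecomposable module -/
def Indec (X : ModuleCat.{u} A) : Prop :=
  (∃ x : X, x ≠ 0) ∧ ∀ e : X ⟶ X, e ≫ e = e → e = 0 ∨ e = 𝟙 X

/-- representation-finite -/
def RepFinite : Prop :=
  ∃ (n : ℕ) (f : Fin n → ModuleCat.{u} A),
    ∀ X : ModuleCat.{u} A, Module.Finite A X → Indec A X → ∃ i, Nonempty (X ≅ f i)
end Defs


section Dual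
variable (k : Type u) [Field k] (A : Type u) [Ring A] [Algebra k A]

/-- The `k`-dual `D(A) = Hom_k(A, k)` as a left `A`-module via `(a • φ) x = φ (x * a)`. -/
noncomputable instance dualModule : Module A (A →ₗ[k] k) where
  smul a φ := φ ∘ₗ LinearMap.mulRight k a
  one_smul φ := by ext x; change φ (x * 1) = φ x; rw [mul_one]
  mul_smul a b φ := by ext x; change φ (x * (a * b)) = φ ((x * a) * b); rw [mul_assoc]
  smul_zero a := rfl
  smul_add a φ ψ := rfl
  add_smul a b φ := by
    ext x; change φ (x * (a + b)) = φ (x * a) + φ (x * b); rw [mul_add, map_add]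
  zero_smul φ := by ext x; change φ (x * 0) = 0; rw [mul_zero, map_zero]

end Dual

/-!
Every finitely generated `A`-module is a finite direct sum of indecomposables (induction on
length), and these are summands of some `A^n` or `D(A)^n`; hence `mod A = add M` for
`M = A ⊕ D(A)`. Put `E = End_A(M)`. The functor `Hom_A(-, M)` sends `add M` to projective
`E`-modules, is left exact, and every `E`-linear map `Hom_A(M^m, M) → Hom_A(M^n, M)` is
`Hom_A(g, M)` for some `g : M^n → M^m`. So for a presentation `E^m → E^n → X → 0` the kernel
of the first map is `Hom_A(coker g, M)`, projective because `coker g ∈ add M`: thus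
`gldim E ≤ 2`.
-/

section AddClosure
variable {A : Type u} [Ring A] {M : ModuleCat.{u} A}

lemma memAdd_iff {N : ModuleCat.{u} A} : MemAdd A M N ↔
    ∃ (n : ℕ) (i : N →ₗ[A] (Fin n → M)) (p : (Fin n → M) →ₗ[A] N), p ∘ₗ i = LinearMap.id :=
  ⟨fun ⟨n, i, p, h⟩ => ⟨n, i.hom, p.hom, congrArg ModuleCat.Hom.hom h⟩,
    fun ⟨n, i, p, h⟩ => ⟨n, ModuleCat.ofHom i, ModuleCat.ofHom p, ModuleCat.hom_ext h⟩⟩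

variable {N N' : Type u} [AddCommGroup N] [Module A N] [AddCommGroup N'] [Module A N']

lemma memAdd_of_comp_eq_id (i : N →ₗ[A] N') (p : N' →ₗ[A] N) (h : p ∘ₗ i = LinearMap.id)
    (hN' : MemAdd A M (.of A N')) : MemAdd A M (.of A N) := by
  obtain ⟨n, i', p', h'⟩ := memAdd_iff.1 hN'
  refine memAdd_iff.2 ⟨n, i' ∘ₗ i, p ∘ₗ p', ?_⟩
  rw [LinearMap.comp_assoc, ← LinearMap.comp_assoc i i' p', h', LinearMap.id_comp, h]

lemma memAdd_of_linearEquiv (e : N ≃ₗ[A] N') (hN' : MemAdd A M (.of A N')) :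
    MemAdd A M (.of A N) :=
  memAdd_of_comp_eq_id e.toLinearMap e.symm.toLinearMap (by ext; simp) hN'

lemma memAdd_of_subsingleton [Subsingleton N] : MemAdd A M (.of A N) :=
  memAdd_iff.2 ⟨0, 0, 0, Subsingleton.elim _ _⟩

lemma memAdd_fin_pi_self (n : ℕ) : MemAdd A M (.of A (Fin n → M)) :=
  memAdd_iff.2 ⟨n, LinearMap.id, LinearMap.id, rfl⟩

lemma memAdd_self : MemAdd A M M :=
  memAdd_of_linearEquiv (LinearEquiv.funUnique (Fin 1) A M).symm (memAdd_fin_pi_self 1)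

lemma memAdd_prod (hN : MemAdd A M (.of A N)) (hN' : MemAdd A M (.of A N')) :
    MemAdd A M (.of A (N × N')) := by
  obtain ⟨n, i, p, h⟩ := memAdd_iff.1 hN
  obtain ⟨n', i', p', h'⟩ := memAdd_iff.1 hN'
  have hsum : MemAdd A M (.of A ((Fin n → M) × (Fin n' → M))) :=
    memAdd_of_linearEquiv ((LinearEquiv.sumArrowLequivProdArrow _ _ A M).symm ≪≫ₗ
      LinearEquiv.funCongrLeft A M finSumFinEquiv.symm) (memAdd_fin_pi_self _)
  refine memAdd_of_comp_eq_id (i.prodMap i') (p.prodMap p') ?_ hsum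
  rw [LinearMap.prodMap_comp, h, h', LinearMap.prodMap_id]

lemma memAdd_pi (hN : MemAdd A M (.of A N)) : ∀ d : ℕ, MemAdd A M (.of A (Fin d → N))
  | 0 => memAdd_of_subsingleton
  | d + 1 =>
    memAdd_of_linearEquiv (Fin.consLinearEquiv A fun _ => N).symm (memAdd_prod hN (memAdd_pi hN d))

end AddClosure

section Decomposition
variable {A : Type u} [Ring A]

lemma exists_isCompl_ne_top_of_not_indec {X : ModuleCat.{u} A} [Nontrivial X]
    (hX : ¬ Indec A X) : ∃ p q : Submodule A X, IsCompl p q ∧ p ≠ ⊤ ∧ q ≠ ⊤ := by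
  obtain ⟨e, he, he0, he1⟩ : ∃ e : X ⟶ X, e ≫ e = e ∧ e ≠ 0 ∧ e ≠ 𝟙 X := by
    simpa [Indec, exists_ne] using hX
  have hidem : IsIdempotentElem e.hom := congrArg ModuleCat.Hom.hom he
  refine ⟨LinearMap.range e.hom, LinearMap.ker e.hom,
    LinearMap.IsIdempotentElem.isCompl hidem, fun htop => he1 ?_, fun htop => he0 ?_⟩
  · ext x
    obtain ⟨y, rfl⟩ := LinearMap.range_eq_top.1 htop x
    exact LinearMap.congr_fun hidem y
  · ext x
    exact LinearMap.ker_eq_top.1 htop ▸ rfl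

theorem memAdd_of_forall_indec [IsArtinianRing A] [IsNoetherianRing A] {M : ModuleCat.{u} A}
    (h : ∀ X : ModuleCat.{u} A, Module.Finite A X → Indec A X → MemAdd A M X)
    (X : ModuleCat.{u} A) [Module.Finite A X] : MemAdd A M X := by
  induction hl : Module.length A X using WellFoundedLT.induction generalizing X with
  | _ l ih =>
  rcases subsingleton_or_nontrivial X with hX | hX
  · exact memAdd_of_subsingleton (N := X)
  by_cases hind : Indec A X
  · exact h X ‹_› hind
  obtain ⟨p, q, hpq, hp, hq⟩ := exists_isCompl_ne_top_of_not_indec hind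
  have hp' := ih _ (hl ▸ Submodule.length_lt hp) (.of A p) rfl
  have hq' := ih _ (hl ▸ Submodule.length_lt hq) (.of A q) rfl
  exact memAdd_of_linearEquiv (Submodule.prodEquivOfIsCompl p q hpq).symm (memAdd_prod hp' hq')

end Decomposition

section ProjectiveInjective
variable {k A : Type u} [Field k] [Ring A] [Algebra k A] {M : ModuleCat.{u} A}

lemma memAdd_of_projective {X : ModuleCat.{u} A} [Module.Finite A X] (hX : Projective X)
    (hA : MemAdd A M (.of A A)) : MemAdd A M X := by
  obtain ⟨n, q, hq⟩ := Module.Finite.exists_fin' A X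
  have : Epi (ModuleCat.ofHom q) := (ModuleCat.epi_iff_surjective _).2 hq
  exact memAdd_of_comp_eq_id (N := X) (Projective.factorThru (𝟙 X) (ModuleCat.ofHom q)).hom q
    (congrArg ModuleCat.Hom.hom (Projective.factorThru_comp (𝟙 X) (ModuleCat.ofHom q)))
    (memAdd_pi hA n)

instance isScalarTower_dual : IsScalarTower k A (A →ₗ[k] k) :=
  ⟨fun c a φ => LinearMap.ext fun x => by
    change φ (x * (c • a)) = c • φ (x * a)
    rw [mul_smul_comm, map_smul]⟩

variable (A) {X : Type u} [AddCommGroup X] [Module A X] [Module k X] [IsScalarTower k A X]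

def toDualOfForm (φ : X →ₗ[k] k) : X →ₗ[A] (A →ₗ[k] k) where
  toFun x := φ ∘ₗ (LinearMap.toSpanSingleton A X x).restrictScalars k
  map_add' x y := by ext a; simp
  map_smul' b x := by
    ext a
    change φ (a • b • x) = φ ((a * b) • x)
    rw [mul_smul]

lemma exists_injective_fin_pi_dual [FiniteDimensional k X] :
    ∃ (d : ℕ) (ι : X →ₗ[A] (Fin d → (A →ₗ[k] k))), Function.Injective ι := by
  let β := Module.finBasis k X
  refine ⟨_, LinearMap.pi fun i => toDualOfForm A (β.coord i), ?_⟩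
  refine (injective_iff_map_eq_zero _).2 fun x hx => β.forall_coord_eq_zero_iff.1 fun i => ?_
  simpa [toDualOfForm] using LinearMap.congr_fun (congrFun hx i) 1

variable {A}

lemma memAdd_of_injective [FiniteDimensional k A] {X : ModuleCat.{u} A} [Module.Finite A X]
    (hX : Injective X) (hD : MemAdd A M (.of A (A →ₗ[k] k))) : MemAdd A M X := by
  let _ : Module k X := .compHom X (algebraMap k A)
  have : IsScalarTower k A X := .of_compHom k A X
  have : Module.Finite k X := .trans A X
  obtain ⟨d, ι, hι⟩ := exists_injective_fin_pi_dual (k := k) A (X := X)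
  have : Mono (ModuleCat.ofHom ι) := (ModuleCat.mono_iff_injective _).2 hι
  exact memAdd_of_comp_eq_id (N := X) ι (Injective.factorThru (𝟙 X) (ModuleCat.ofHom ι)).hom
    (congrArg ModuleCat.Hom.hom (Injective.comp_factorThru (𝟙 X) (ModuleCat.ofHom ι)))
    (memAdd_pi hD d)

end ProjectiveInjective

section EndomorphismRing
variable {A : Type u} [Ring A] (W : Type u) [AddCommGroup W] [Module A W]

local notation "E" => Module.End A W

def homFinPiEquiv (r : ℕ) : (Fin r → E) ≃ₗ[E] ((Fin r → W) →ₗ[A] W) :=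
  LinearMap.lsum A (fun _ => W) E

instance (r : ℕ) : Module.Free E ((Fin r → W) →ₗ[A] W) :=
  .of_equiv (homFinPiEquiv W r)

instance (r : ℕ) : Module.Finite E ((Fin r → W) →ₗ[A] W) :=
  .equiv (homFinPiEquiv W r)

variable {W}

lemma exists_eq_lcomp {ι V : Type*} [Fintype ι] [AddCommGroup V] [Module A V]
    (F : ((ι → W) →ₗ[A] W) →ₗ[E] (V →ₗ[A] W)) :
    ∃ g : V →ₗ[A] (ι → W), F = LinearMap.lcomp E W g := by
  classical
  refine ⟨LinearMap.pi fun i => F (LinearMap.proj i), LinearMap.ext fun h => ?_⟩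
  have hh : h = ∑ i, (h ∘ₗ LinearMap.single A (fun _ => W) i) • LinearMap.proj i :=
    ((LinearMap.lsum A (fun _ => W) E).apply_symm_apply h).symm
  ext v
  conv_lhs => rw [hh]
  simp only [map_sum, map_smul, LinearMap.sum_apply, LinearMap.smul_apply, Module.End.smul_def,
    LinearMap.comp_apply, LinearMap.lcomp_apply, LinearMap.coe_single]
  rw [← map_sum, Finset.univ_sum_single]
  rfl

lemma exact_lcomp_mkQ_lcomp {V V' : Type u} [AddCommGroup V] [Module A V] [AddCommGroup V']
    [Module A V'] (g : V →ₗ[A] V') :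
    Function.Exact (LinearMap.lcomp E W (LinearMap.range g).mkQ) (LinearMap.lcomp E W g) := by
  intro h
  simp only [LinearMap.lcomp_apply', Set.mem_range]
  refine ⟨fun hh => ⟨(LinearMap.range g).liftQ h (LinearMap.range_le_ker_iff.2 hh),
    Submodule.liftQ_mkQ _ _ _⟩, ?_⟩
  rintro ⟨q, rfl⟩
  rw [LinearMap.comp_assoc, LinearMap.range_mkQ_comp, LinearMap.comp_zero]

lemma projective_hom_of_memAdd {C : Type u} [AddCommGroup C] [Module A C]
    (hC : MemAdd A (.of A W) (.of A C)) : Module.Projective E (C →ₗ[A] W) := by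
  obtain ⟨n, i, p, h⟩ := memAdd_iff.1 hC
  refine .of_split (LinearMap.lcomp E W p) (LinearMap.lcomp E W i) ?_
  ext q x
  exact congrArg q (LinearMap.congr_fun h x)

end EndomorphismRing

section ProjectiveDimension
variable {R : Type u} [Ring R]

lemma PdLE.succ : ∀ {n : ℕ} {X : ModuleCat.{u} R}, PdLE R n X → PdLE R (n + 1) X
  | 0, _, h => Or.inl h
  | _ + 1, _, Or.inl h => Or.inl h
  | _ + 1, _, Or.inr ⟨K, P, f, g, hP, hfg, hK⟩ => Or.inr ⟨K, P, f, g, hP, hfg, hK.succ⟩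

lemma pdLE_succ_of_surjective {n : ℕ} {P X : Type u} [AddCommGroup P] [Module R P]
    [Module.Projective R P] [AddCommGroup X] [Module R X] (p : P →ₗ[R] X)
    (hp : Function.Surjective p) (hK : PdLE R n (.of R (LinearMap.ker p))) :
    PdLE R (n + 1) (.of R X) :=
  Or.inr ⟨_, _, ModuleCat.ofHom (LinearMap.ker p).subtype, ModuleCat.ofHom p, inferInstance,
    ⟨Submodule.injective_subtype _, hp, Submodule.range_subtype _⟩, hK⟩

end ProjectiveDimension

section Auslander
variable {A : Type u} [Ring A] (W : Type u) [AddCommGroup W] [Module A W]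

local notation "E" => Module.End A W

theorem globalDimLE_two_end_of_forall_memAdd [Module.Finite A W] [IsNoetherianRing E]
    (hW : ∀ C : ModuleCat.{u} A, Module.Finite A C → MemAdd A (.of A W) C) :
    GlobalDimLE E 2 := by
  intro X _
  obtain ⟨n, p, hp⟩ := Module.Finite.exists_fin' E X
  let p' := p ∘ₗ (homFinPiEquiv W n).symm.toLinearMap
  obtain ⟨m, q, hq⟩ := Module.Finite.exists_fin' E (LinearMap.ker p')
  let q' := q ∘ₗ (homFinPiEquiv W m).symm.toLinearMap
  obtain ⟨g, hg⟩ := exists_eq_lcomp ((LinearMap.ker p').subtype ∘ₗ q')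
  have hker :
      LinearMap.ker q' = LinearMap.range (LinearMap.lcomp E W (LinearMap.range g).mkQ) := by
    rw [← LinearMap.ker_comp_of_ker_eq_bot q' (Submodule.ker_subtype _), hg,
      (exact_lcomp_mkQ_lcomp g).linearMap_ker_eq]
  have := projective_hom_of_memAdd (hW (.of A ((Fin m → W) ⧸ LinearMap.range g)) inferInstance)
  have : Module.Projective E (LinearMap.ker q') := .of_equiv
    ((LinearEquiv.ofInjective _ (LinearMap.lcomp_injective_of_surjective _
      (Submodule.mkQ_surjective _))).trans (LinearEquiv.ofEq _ _ hker.symm))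
  exact pdLE_succ_of_surjective p' (hp.comp (LinearEquiv.surjective _))
    (pdLE_succ_of_surjective q' (hq.comp (LinearEquiv.surjective _))
      (inferInstanceAs (Projective (ModuleCat.of E (LinearMap.ker q')))))

end Auslander

lemma isNoetherianRing_end (k : Type u) {A W : Type u} [Field k] [Ring A] [Algebra k A]
    [AddCommGroup W] [Module A W] [Module k W] [IsScalarTower k A W] [FiniteDimensional k W] :
    IsNoetherianRing (Module.End A W) :=
  have : Module.Finite k (Module.End A W) :=
    .of_injective (LinearMap.restrictScalarsₗ k A W W k) (LinearMap.restrictScalars_injective k)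
  .of_finite k _

theorem stmt11_general {k : Type u} [Field k] (A : Type u) [Ring A] [Algebra k A]
    [FiniteDimensional k A]
    (h : ∀ X : ModuleCat.{u} A, Module.Finite A X → Indec A X →
      (Projective X ∨ Injective X)) :
    GlobalDimLE (Module.End A (ModuleCat.of A (A × (A →ₗ[k] k)))) 3 ∧
    RepDimLE A 3 := by
  have : IsArtinianRing A := .of_finite k A
  have : IsNoetherianRing A := .of_finite k A
  have : Module.Finite A (A →ₗ[k] k) := .of_restrictScalars_finite k A _
  have := isNoetherianRing_end k (A := A) (W := A × (A →ₗ[k] k))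
  let M := ModuleCat.of A (A × (A →ₗ[k] k))
  have hA : MemAdd A M (.of A A) :=
    memAdd_of_comp_eq_id (LinearMap.inl A A _) (LinearMap.fst A A _) rfl memAdd_self
  have hD : MemAdd A M (.of A (A →ₗ[k] k)) :=
    memAdd_of_comp_eq_id (LinearMap.inr A A _) (LinearMap.snd A A _) rfl memAdd_self
  have hM : ∀ X : ModuleCat.{u} A, Module.Finite A X → MemAdd A M X := fun X _ =>
    memAdd_of_forall_indec (fun Y _ hY => (h Y ‹_› hY).elim
      (memAdd_of_projective · hA) (memAdd_of_injective · hD)) X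
  have hgl : GlobalDimLE (Module.End A M) 3 := fun X hX =>
    (globalDimLE_two_end_of_forall_memAdd _ hM X hX).succ
  exact ⟨hgl, M, inferInstance, ⟨hA, fun N _ hN => memAdd_of_injective hN hD⟩, hgl⟩

/-- If `A` is non-semisimple and every indecomposable `A`-module is
projective or injective, then `gldim End_A(A ⊕ D(A)) ≤ 3` and `rep.dim A ≤ 3`. -/
theorem stmt11 {k : Type u} [Field k] (A : Type u) [Ring A] [Algebra k A]
    [FiniteDimensional k A] (hss : ¬ IsSemisimpleRing A)
    (h : ∀ X : ModuleCat.{u} A, Module.Finite A X → Indec A X →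
      (Projective X ∨ Injective X)) :
    GlobalDimLE (Module.End A (ModuleCat.of A (A × (A →ₗ[k] k)))) 3 ∧
    RepDimLE A 3 :=
  stmt11_general A h
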